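/- arXiv:1707.00615 — 2 statements merged into one kernel-verified Lean document; each statement's English description precedes it below -/
import Mathlib

section
/- Let M be an atom-free MVS and f : X × X → M a quasimetric function. Then the closed-ball neighbourhood system x ↦ { B̄_f(x,m) : m ∈ M* }, where B̄_f(x,m) = {y : f(x,y) ⊴ m}, is a neighbourhood system (satisfying (B1) x ∈ U for each U in the system at x; (B2) any two members at x contain a third member at x; (B3) each U at x contains some V at x such that every y ∈ V has a member at y contained in U), and it is equivalent to the open-ball system x ↦ { B_f(x,m) : m ∈ M* }, i.e., each open ball at x contains a closed ball at x and vice versa. -/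
/-! Atom-freeness splits any `m ≠ e` as `m = n + c` with `n, c ≠ e`. By the triangle inequality
the closed `c`-ball around any point of the closed `n`-ball lies in the closed `m`-ball, and the
closed `n`-ball lies in the open `m`-ball; conversely every open ball lies in the closed ball of the
same radius. -/

universe u v w

structure MVS (M : Type u) where
  add : M → M → M
  e : M
  assoc : ∀ a b c : M, add (add a b) c = add a (add b c)
  add_e : ∀ a : M, add a e = a
  e_add : ∀ a : M, add e a = a
  eq_e_of_add_eq_e : ∀ a b : M, add a b = e → a = e ∧ b = e
  exists_common : ∀ a b : M, a ≠ e → b ≠ e →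
    ∃ c, c ≠ e ∧ (∃ d, add c d = a) ∧ (∃ d, add c d = b)
  nontrivial : ∃ a : M, a ≠ e

variable {M : Type u} {X : Type v}

/-- `a ⊴ b` iff there is `c` with `a + c = b`. -/
def MVS.le (S : MVS M) (a b : M) : Prop := ∃ c, S.add a c = b

/-- `a ◁ b` iff there is `c ≠ e` with `a + c = b`. -/
def MVS.lt (S : MVS M) (a b : M) : Prop := ∃ c, c ≠ S.e ∧ S.add a c = b

def MVS.Commutative (S : MVS M) : Prop := ∀ a b, S.add a b = S.add b a

/-- An MVS is atom-free if it is commutative and every `m ≠ e` admits `n ≠ e` with `n ◁ m`. -/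
def MVS.AtomFree (S : MVS M) : Prop :=
  S.Commutative ∧ ∀ m, m ≠ S.e → ∃ n, n ≠ S.e ∧ S.lt n m

/-- A quasimetric function: triangle inequality and `f x x = e`. -/
def IsQuasimetric (S : MVS M) (f : X → X → M) : Prop :=
  (∀ x y z, S.le (f x z) (S.add (f x y) (f y z))) ∧ ∀ x, f x x = S.e

/-- Open ball `B_f(x,m) = {y | f x y ◁ m}`. -/
def ball (S : MVS M) (f : X → X → M) (x : X) (m : M) : Set X := {y | S.lt (f x y) m}

/-- Closed ball `B̄_f(x,m) = {y | f x y ⊴ m}`. -/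
def closedBall (S : MVS M) (f : X → X → M) (x : X) (m : M) : Set X := {y | S.le (f x y) m}

/-- The topology induced by a quasimetric function: open balls form a neighbourhood base. -/
def qTopology (S : MVS M) (f : X → X → M) : TopologicalSpace X :=
  TopologicalSpace.mkOfNhds fun x => ⨅ m ∈ {m : M | m ≠ S.e}, Filter.principal (ball S f x m)

/-- Entourage `U_m = {(x,y) | f x y ⊴ m}`. -/
def ent (S : MVS M) (f : X → X → M) (m : M) : Set (X × X) := {p | S.le (f p.1 p.2) m}

/-- `qcomp A B = A ∘ B = {(x,z) | ∃ y, (x,y) ∈ B ∧ (y,z) ∈ A}`. -/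
def qcomp (A B : Set (X × X)) : Set (X × X) := {p | ∃ y, (p.1, y) ∈ B ∧ (y, p.2) ∈ A}

def IsQuasiUniformity (U : Set (Set (X × X))) : Prop :=
  U.Nonempty ∧
  (∀ u ∈ U, ∀ x : X, (x, x) ∈ u) ∧
  (∀ u ∈ U, ∀ v : Set (X × X), u ⊆ v → v ∈ U) ∧
  (∀ u ∈ U, ∀ v ∈ U, u ∩ v ∈ U) ∧
  (∀ u ∈ U, ∃ v ∈ U, qcomp v v ⊆ u)

def IsBaseOf (B U : Set (Set (X × X))) : Prop := B ⊆ U ∧ ∀ u ∈ U, ∃ b ∈ B, b ⊆ u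

/-- `U + V` : the intersection of all entourages `U_n` containing `V ∘ U`. -/
def addEnt (S : MVS M) (f : X → X → M) (A B : Set (X × X)) : Set (X × X) :=
  ⋂₀ {w | (∃ m, ent S f m = w) ∧ qcomp B A ⊆ w}

/-- The topology induced by a base of a quasiuniformity: sections `U[x]` form a
neighbourhood base. -/
def quTopology (B : Set (Set (X × X))) : TopologicalSpace X :=
  TopologicalSpace.mkOfNhds fun x => ⨅ u ∈ B, Filter.principal {y | (x, y) ∈ u}

/-- `n`-fold sum `m + ⋯ + m`. -/
def nfold (S : MVS M) : ℕ → M → M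
  | 0, _ => S.e
  | Nat.succ n, m => S.add m (nfold S n m)

namespace MVS

variable (S : MVS M)

theorem le_trans {a b c : M} (hab : S.le a b) (hbc : S.le b c) : S.le a c := by
  obtain ⟨u, rfl⟩ := hab
  obtain ⟨v, rfl⟩ := hbc
  exact ⟨S.add u v, (S.assoc _ _ _).symm⟩

theorem e_le (a : M) : S.le S.e a := ⟨a, S.e_add a⟩

theorem le_of_lt {a b : M} (h : S.lt a b) : S.le a b :=
  let ⟨c, _, hc⟩ := h
  ⟨c, hc⟩

theorem lt_of_le_of_lt {a b c : M} (hab : S.le a b) (hbc : S.lt b c) : S.lt a c := by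
  obtain ⟨u, rfl⟩ := hab
  obtain ⟨v, hv, rfl⟩ := hbc
  exact ⟨S.add u v, fun h => hv (S.eq_e_of_add_eq_e u v h).2, (S.assoc _ _ _).symm⟩

theorem add_le_add (hS : S.Commutative) {a b c d : M} (hac : S.le a c) (hbd : S.le b d) :
    S.le (S.add a b) (S.add c d) := by
  obtain ⟨u, rfl⟩ := hac
  obtain ⟨v, rfl⟩ := hbd
  refine ⟨S.add u v, ?_⟩
  rw [S.assoc a b, ← S.assoc b u v, hS b u, S.assoc u b v, ← S.assoc a u]

end MVS

section Balls

variable {S : MVS M} {f : X → X → M}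

theorem mem_closedBall_self (hf : ∀ x, f x x = S.e) (x : X) (m : M) : x ∈ closedBall S f x m := by
  simpa only [closedBall, Set.mem_ofPred_eq, hf] using S.e_le m

theorem closedBall_subset_closedBall {m₁ m₂ : M} (h : S.le m₁ m₂) (x : X) :
    closedBall S f x m₁ ⊆ closedBall S f x m₂ :=
  fun _ hy => S.le_trans hy h

theorem closedBall_subset_ball {n m : M} (h : S.lt n m) (x : X) :
    closedBall S f x n ⊆ ball S f x m :=
  fun _ hy => S.lt_of_le_of_lt hy h

theorem ball_subset_closedBall (x : X) (m : M) : ball S f x m ⊆ closedBall S f x m :=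
  fun _ hy => S.le_of_lt hy

theorem closedBall_subset_closedBall_add (hS : S.Commutative)
    (htri : ∀ x y z, S.le (f x z) (S.add (f x y) (f y z))) {x y : X} {a : M}
    (hy : y ∈ closedBall S f x a) (b : M) :
    closedBall S f y b ⊆ closedBall S f x (S.add a b) :=
  fun z hz => S.le_trans (htri x y z) (S.add_le_add hS hy hz)

end Balls

theorem stmt_9 (S : MVS M) (hAF : S.AtomFree) (f : X → X → M)
    (hf : IsQuasimetric S f) :
    (∀ (x : X) (m : M), m ≠ S.e → x ∈ closedBall S f x m) ∧
    (∀ (x : X) (m1 m2 : M), m1 ≠ S.e → m2 ≠ S.e →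
      ∃ m3, m3 ≠ S.e ∧ closedBall S f x m3 ⊆ closedBall S f x m1 ∩ closedBall S f x m2) ∧
    (∀ (x : X) (m : M), m ≠ S.e → ∃ m', m' ≠ S.e ∧
      ∀ y ∈ closedBall S f x m', ∃ m'', m'' ≠ S.e ∧
        closedBall S f y m'' ⊆ closedBall S f x m) ∧
    (∀ (x : X) (m : M), m ≠ S.e → ∃ m', m' ≠ S.e ∧ closedBall S f x m' ⊆ ball S f x m) ∧
    (∀ (x : X) (m : M), m ≠ S.e → ∃ m', m' ≠ S.e ∧ ball S f x m' ⊆ closedBall S f x m) := by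
  obtain ⟨hcomm, hatom⟩ := hAF
  obtain ⟨htri, hself⟩ := hf
  refine ⟨fun x m _ => mem_closedBall_self hself x m, ?_, ?_, ?_, ?_⟩
  · intro x m1 m2 h1 h2
    obtain ⟨c, hc, hc1, hc2⟩ := S.exists_common m1 m2 h1 h2
    exact ⟨c, hc, Set.subset_inter (closedBall_subset_closedBall hc1 x)
      (closedBall_subset_closedBall hc2 x)⟩
  · intro x m hm
    obtain ⟨n, hn, c, hc, rfl⟩ := hatom m hm
    exact ⟨n, hn, fun y hy => ⟨c, hc, closedBall_subset_closedBall_add hcomm htri hy c⟩⟩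
  · intro x m hm
    obtain ⟨n, hn, hnm⟩ := hatom m hm
    exact ⟨n, hn, closedBall_subset_ball hnm x⟩
  · exact fun x m hm => ⟨m, hm, ball_subset_closedBall x m⟩
end

section
/- Every M-space over a commutative MVS M can be embedded (as a restriction of the quasimetric function) into an M-space that is both M-full (the quasimetric function is surjective) and M-convex (whenever f(x,y) = m2 + m3 there exists z with f(x,z) = m2 and f(z,y) = m3). -/
universe u v w

variable {M : Type u} {X : Type v}

/-! A commutative MVS is a commutative monoid in which `a ⊴ b` is divisibility `a ∣ b`, so an
`M`-space is a set with `d x z ∣ d x y * d y z` and `d x x = 1`.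

Fullness: glue a copy of `M` to `X` at one point, with `d a b = b` for distinct `a, b : M`.
Convexity: for all points `p, q` and every factorisation `d p q = a * b`, adjoin a formal point
`z = mid p q a b` with `d · z = d · p * a` and `d z · = b * d q ·`, and iterate, so that points are
binary trees over the glued space. The distance between two trees is computed by peeling the last
midpoint of the deeper one, and the triangle inequality follows by induction, peeling the deepest
of the three points. -/

open Function

section DvdQuasimetric

variable {α Y Z : Type*} [CommMonoid α]

structure IsDvdQuasimetric (d : Y → Y → α) : Prop where
  dvd_mul : ∀ x y z, d x z ∣ d x y * d y z
  apply_self : ∀ x, d x x = 1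

def IsMConvex (d : Y → Y → α) : Prop :=
  ∀ (m₂ m₃ : α) (x y : Y), d x y = m₂ * m₃ → ∃ z, d x z = m₂ ∧ d z y = m₃

def comapWeighted [DecidableEq Y] (d : Z → Z → α) (π : Y → Z) (w : Y → α) (p q : Y) : α :=
  d (π p) (π q) * if p = q then 1 else w q

theorem comapWeighted_of_eq [DecidableEq Y] {d : Z → Z → α} (hd : IsDvdQuasimetric d)
    {π : Y → Z} (w : Y → α) {p q : Y} (h : π p = π q) :
    comapWeighted d π w p q = if p = q then 1 else w q := by
  rw [comapWeighted, h, hd.apply_self, one_mul]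

theorem IsDvdQuasimetric.comapWeighted [DecidableEq Y] {d : Z → Z → α}
    (hd : IsDvdQuasimetric d) (π : Y → Z) (w : Y → α) : IsDvdQuasimetric (comapWeighted d π w) := by
  refine ⟨fun p q r => ?_, fun p => comapWeighted_of_eq hd w rfl |>.trans (if_pos rfl)⟩
  have hw : (if p = r then 1 else w r) ∣ (if p = q then 1 else w q) * if q = r then 1 else w r := by
    by_cases hpr : p = r
    · rw [if_pos hpr]; exact one_dvd _
    rw [if_neg hpr]
    by_cases hqr : q = r
    · subst hqr; rw [if_neg hpr, if_pos rfl, mul_one]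
    · rw [if_neg hqr]; exact dvd_mul_left _ _
  unfold _root_.comapWeighted
  rw [mul_mul_mul_comm]
  exact mul_dvd_mul (hd.dvd_mul _ _ _) hw

end DvdQuasimetric

/-- `mid p q a b` is a formal point `z` with `d p z = a` and `d z q = b`. It is a genuine midpoint
only when `d p q = a * b`; otherwise it is a copy of `p`. -/
inductive MidpointTree (β α : Type*)
  | leaf : β → MidpointTree β α
  | mid : MidpointTree β α → MidpointTree β α → α → α → MidpointTree β α

namespace MidpointTree

open Classical

variable {α β : Type*}

def depth : MidpointTree β α → ℕ
  | leaf _ => 0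
  | mid p q _ _ => max p.depth q.depth + 1

theorem leaf_injective : Injective (leaf : β → MidpointTree β α) := fun _ _ h => leaf.inj h

noncomputable def qdist [CommMonoid α] (d : β → β → α) : MidpointTree β α → MidpointTree β α → α
  | leaf u, leaf v => d u v
  | leaf u, mid A B a b =>
      if qdist d A B = a * b then qdist d (leaf u) A * a else qdist d (leaf u) A
  | mid A B a b, leaf v =>
      if qdist d A B = a * b then b * qdist d B (leaf v) else qdist d A (leaf v)
  | mid C D c d', mid A B a b =>
      if mid C D c d' = mid A B a b then 1
      else if (mid C D c d').depth ≤ (mid A B a b).depth then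
        (if qdist d A B = a * b then qdist d (mid C D c d') A * a else qdist d (mid C D c d') A)
      else
        (if qdist d C D = c * d' then d' * qdist d D (mid A B a b) else qdist d C (mid A B a b))
  termination_by p q => (max p.depth q.depth, p.depth + q.depth)
  decreasing_by all_goals (simp only [Prod.lex_def, depth] at *; omega)

variable [CommMonoid α] {d : β → β → α}

@[simp]
theorem qdist_leaf_leaf (u v : β) : qdist d (leaf u) (leaf v) = d u v := by
  rw [qdist]

theorem qdist_self (hd : ∀ u, d u u = 1) : ∀ p : MidpointTree β α, qdist d p p = 1
  | leaf u => by rw [qdist_leaf_leaf, hd]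
  | mid A B a b => by rw [qdist, if_pos rfl]

theorem qdist_mid_right {p A B : MidpointTree β α} {a b : α} (hne : p ≠ mid A B a b)
    (hdepth : p.depth ≤ (mid A B a b).depth) :
    qdist d p (mid A B a b) = if qdist d A B = a * b then qdist d p A * a else qdist d p A := by
  cases p with
  | leaf u => rw [qdist]
  | mid C D c d' => rw [qdist, if_neg hne, if_pos hdepth]

theorem qdist_mid_left {q A B : MidpointTree β α} {a b : α}
    (hdepth : q.depth < (mid A B a b).depth) :
    qdist d (mid A B a b) q = if qdist d A B = a * b then b * qdist d B q else qdist d A q := by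
  cases q with
  | leaf v => rw [qdist]
  | mid C D c d' =>
    have hne : mid A B a b ≠ mid C D c d' := fun h => by rw [h] at hdepth; omega
    rw [qdist, if_neg hne, if_neg (by omega)]

theorem qdist_dvd_mul (hd : IsDvdQuasimetric d) (p q r : MidpointTree β α) :
    qdist d p r ∣ qdist d p q * qdist d q r := by
  have hself := qdist_self hd.apply_self
  by_cases hpq : p = q
  · rw [hpq, hself, one_mul]
  by_cases hqr : q = r
  · rw [hqr, hself, mul_one]
  by_cases hpr : p = r
  · rw [hpr, hself]; exact one_dvd _
  by_cases hr : p.depth ≤ r.depth ∧ q.depth ≤ r.depth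
  · cases r with
    | leaf w =>
      cases p with
      | mid => simp [depth] at hr
      | leaf u =>
        cases q with
        | mid => simp [depth] at hr
        | leaf v => simpa using hd.dvd_mul u v w
    | mid A B a b =>
      rw [qdist_mid_right hpr hr.1, qdist_mid_right hqr hr.2]
      have ih := qdist_dvd_mul hd p q A
      split_ifs
      · rw [← mul_assoc]; exact mul_dvd_mul_right ih a
      · exact ih
  by_cases hpq' : p.depth ≤ q.depth
  · have hrq : r.depth < q.depth := by omega
    cases q with
    | leaf => simp [depth] at hrq
    | mid A B a b =>
      rw [qdist_mid_right hpq hpq', qdist_mid_left hrq]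
      split_ifs with hAB
      · calc qdist d p r ∣ qdist d p A * qdist d A r := qdist_dvd_mul hd p A r
          _ ∣ qdist d p A * (qdist d A B * qdist d B r) :=
            mul_dvd_mul_left _ (qdist_dvd_mul hd A B r)
          _ = qdist d p A * a * (b * qdist d B r) := by rw [hAB]; ac_rfl
      · exact qdist_dvd_mul hd p A r
  · have hrp : r.depth < p.depth := by omega
    have hqp : q.depth < p.depth := by omega
    cases p with
    | leaf => simp [depth] at hrp
    | mid A B a b =>
      rw [qdist_mid_left hrp, qdist_mid_left hqp]
      split_ifs
      · rw [mul_assoc]; exact mul_dvd_mul_left b (qdist_dvd_mul hd B q r)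
      · exact qdist_dvd_mul hd A q r
  termination_by (max p.depth (max q.depth r.depth), p.depth + q.depth + r.depth)
  decreasing_by all_goals (simp only [Prod.lex_def, depth] at *; omega)

theorem isDvdQuasimetric_qdist (hd : IsDvdQuasimetric d) : IsDvdQuasimetric (qdist d) :=
  ⟨qdist_dvd_mul hd, qdist_self hd.apply_self⟩

theorem qdist_to_mid (hd : ∀ u, d u u = 1) {p q : MidpointTree β α} {a b : α}
    (h : qdist d p q = a * b) : qdist d p (mid p q a b) = a := by
  have hdepth : p.depth < (mid p q a b).depth := by simp only [depth]; omega
  rw [qdist_mid_right (fun h => by rw [← h] at hdepth; omega) hdepth.le, if_pos h,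
    qdist_self hd, one_mul]

theorem qdist_from_mid (hd : ∀ u, d u u = 1) {p q : MidpointTree β α} {a b : α}
    (h : qdist d p q = a * b) : qdist d (mid p q a b) q = b := by
  have hdepth : q.depth < (mid p q a b).depth := by simp only [depth]; omega
  rw [qdist_mid_left hdepth, if_pos h, qdist_self hd, mul_one]

theorem isMConvex_qdist (hd : ∀ u, d u u = 1) : IsMConvex (qdist d) :=
  fun _ _ _ _ h => ⟨_, qdist_to_mid hd h, qdist_from_mid hd h⟩

theorem surjective_uncurry_qdist (h : Surjective (uncurry d)) :
    Surjective (uncurry (qdist d)) := fun m => by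
  obtain ⟨⟨u, v⟩, huv⟩ := h m
  exact ⟨(leaf u, leaf v), (qdist_leaf_leaf u v).trans huv⟩

end MidpointTree

section Extension

variable [CommMonoid M] {d : X → X → M}

theorem exists_isometric_embedding_nonempty (hd : IsDvdQuasimetric d) :
    ∃ (Z : Type v) (dZ : Z → Z → M) (j : X → Z),
      IsDvdQuasimetric dZ ∧ (∀ x y, dZ (j x) (j y) = d x y) ∧ Nonempty Z := by
  rcases isEmpty_or_nonempty X with hX | hX
  · exact ⟨PUnit, fun _ _ => 1, fun _ => .unit, ⟨fun _ _ _ => one_dvd _, fun _ => rfl⟩,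
      fun x => isEmptyElim x, inferInstance⟩
  · exact ⟨X, d, id, hd, fun _ _ => rfl, hX⟩

theorem exists_full_extension (hd : IsDvdQuasimetric d) :
    ∃ d' : X ⊕ M → X ⊕ M → M, IsDvdQuasimetric d' ∧ (∀ x y, d' (.inl x) (.inl y) = d x y) ∧
      Surjective (uncurry d') := by
  classical
  obtain ⟨Z, dZ, j, hdZ, hj, ⟨z₀⟩⟩ := exists_isometric_embedding_nonempty hd
  -- the copy of `M` lies over `z₀`; reaching `inr b` from any other point costs an extra factor `b`
  let π : X ⊕ M → Z := Sum.elim j fun _ => z₀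
  let w : X ⊕ M → M := Sum.elim 1 id
  refine ⟨comapWeighted dZ π w, hdZ.comapWeighted π w, fun x y => ?_,
    fun m => ⟨(.inr 1, .inr m), ?_⟩⟩
  · simp [comapWeighted, π, w, hj]
  · rw [uncurry_apply_pair, comapWeighted_of_eq hdZ (p := .inr 1) (q := .inr m) w rfl]
    split_ifs with h
    · exact Sum.inr_injective h
    · rfl

theorem exists_full_mconvex_embedding (hd : IsDvdQuasimetric d) :
    ∃ (Y : Type (max u v)) (g : Y → Y → M) (i : X → Y), IsDvdQuasimetric g ∧ Injective i ∧
      (∀ x x', g (i x) (i x') = d x x') ∧ Surjective (uncurry g) ∧ IsMConvex g := by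
  obtain ⟨d', hd', hext, hsurj⟩ := exists_full_extension hd
  refine ⟨MidpointTree (X ⊕ M) M, MidpointTree.qdist d', fun x => .leaf (.inl x),
    MidpointTree.isDvdQuasimetric_qdist hd', MidpointTree.leaf_injective.comp Sum.inl_injective,
    fun x x' => ?_, MidpointTree.surjective_uncurry_qdist hsurj,
    MidpointTree.isMConvex_qdist hd'.apply_self⟩
  rw [MidpointTree.qdist_leaf_leaf, hext]

end Extension

abbrev MVS.toCommMonoid (S : MVS M) (hc : S.Commutative) : CommMonoid M where
  mul := S.add
  mul_assoc := S.assoc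
  one := S.e
  one_mul := S.e_add
  mul_one := S.add_e
  mul_comm := hc

theorem MVS.isQuasimetric_iff_isDvdQuasimetric (S : MVS M) (hc : S.Commutative) (f : X → X → M) :
    letI := S.toCommMonoid hc
    IsQuasimetric S f ↔ IsDvdQuasimetric f := by
  let := S.toCommMonoid hc
  exact ⟨fun h => ⟨fun x y z => (h.1 x y z).imp fun _ h => h.symm, h.2⟩,
      fun h => ⟨fun x y z => (h.dvd_mul x y z).imp fun _ h => h.symm, h.apply_self⟩⟩

theorem stmt_16 (S : MVS M) (hc : S.Commutative) (f : X → X → M)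
    (hf : IsQuasimetric S f) :
    ∃ (Y : Type (max u v)) (g : Y → Y → M) (i : X → Y),
      IsQuasimetric S g ∧
      Function.Injective i ∧
      (∀ x x' : X, g (i x) (i x') = f x x') ∧
      Function.Surjective (Function.uncurry g) ∧
      (∀ (m2 m3 : M) (x y : Y), g x y = S.add m2 m3 →
        ∃ z, g x z = m2 ∧ g z y = m3) := by
  let := S.toCommMonoid hc
  obtain ⟨Y, g, i, hg, hi, hgi, hsurj, hconv⟩ :=
    exists_full_mconvex_embedding ((S.isQuasimetric_iff_isDvdQuasimetric hc f).1 hf)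
  exact ⟨Y, g, i, (S.isQuasimetric_iff_isDvdQuasimetric hc g).2 hg, hi, hgi, hsurj, hconv⟩
end
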